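/- Let α ≥ m ≥ 1 be integers and let M = (M_{i,j})_{i,j=0}^{m-1} be a Hankel-type symmetric matrix with M_{i,j} = a_{i+j} if i+j ≤ m-1 and M_{i,j} = 0 if i+j > m-1, where a_{m-1} ≠ 0. Then the polynomials ℛ_j(x) = ((α-1)!/(m-j)!)(x+1)_{m-j} + (j-1)!(x+1)_α Σ_{i=0}^{m-1}((-1)^i M_{j-1,i}/(α+i)!)(x-i+1)_i satisfy deg ℛ_j = α + m - j for each j = 1,...,m, and consequently the Casorati determinant Ω(x) = det(ℛ_i(x-j))_{i,j=1}^m has degree mα. -/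

import Mathlib

/-!
Write `d_j = α + m - j`. In `ℛ_j` the Hankel shape of `M` kills every term of the sum with
`i > m - j`, and the last surviving term carries `a_{m-1} ≠ 0`; so the sum has degree exactly
`m - j`, and the factor `(x+1)_α` lifts it to `d_j`, above the degree of the first summand.

For `Ω`, binomial combinations of the columns replace the `k`-th column by the `k`-th difference
of `ℛ_i`, which has degree `d_i - k` and leading coefficient `(-1)^k (d_i)_k lc(ℛ_i)` (falling
factorial). Every term of the Leibniz expansion then has degree at most
`Σ d_i - m(m-1)/2 = mα`, and the coefficient in that degree is `± ∏ lc(ℛ_i)` times the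
Vandermonde determinant of the distinct numbers `d_i`, which is nonzero.
-/

open Polynomial Finset

/-- ℛ_j(x) = ((α-1)!/(m-j)!)(x+1)_{m-j}
             + (j-1)!(x+1)_α ∑_{i=0}^{m-1}((-1)^i M_{j-1,i}/(α+i)!)(x-i+1)_i
(here j = j0+1 with j0 : Fin m). -/
noncomputable def calR (α m : ℕ) (M : Matrix (Fin m) (Fin m) ℝ) (j0 : Fin m) : Polynomial ℝ :=
  Polynomial.C ((Nat.factorial (α - 1) : ℝ) / (Nat.factorial (m - 1 - j0))) *
      (ascPochhammer ℝ (m - 1 - (j0 : ℕ))).comp (Polynomial.X + 1)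
    + Polynomial.C ((Nat.factorial j0 : ℝ)) * ((ascPochhammer ℝ α).comp (Polynomial.X + 1)) *
      ∑ i : Fin m, Polynomial.C ((-1) ^ (i : ℕ) * M j0 i / (Nat.factorial (α + i))) *
        (ascPochhammer ℝ (i : ℕ)).comp (Polynomial.X - Polynomial.C (i : ℝ) + 1)

namespace Polynomial

theorem coeff_prod_sum_of_natDegree_le {R ι : Type*} [CommSemiring R] (s : Finset ι)
    (f : ι → R[X]) (n : ι → ℕ) (h : ∀ i ∈ s, (f i).natDegree ≤ n i) :
    (∏ i ∈ s, f i).coeff (∑ i ∈ s, n i) = ∏ i ∈ s, (f i).coeff (n i) := by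
  induction s using Finset.cons_induction with
  | empty => simp
  | cons a s ha ih =>
    have hs : ∀ i ∈ s, (f i).natDegree ≤ n i := fun i hi => h i (mem_cons_of_mem hi)
    rw [prod_cons, sum_cons, coeff_mul_add_eq_of_natDegree_le (h a (mem_cons_self a s))
      ((natDegree_prod_le _ _).trans (sum_le_sum hs)), ih hs, prod_cons]

variable {R : Type*} [CommRing R]

theorem coeff_taylor_of_natDegree_le (r : R) {p : R[X]} {n : ℕ} (h : p.natDegree ≤ n) :
    (taylor r p).coeff n = p.coeff n := by
  have hconst : (hasseDeriv n p).natDegree = 0 := by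
    have := natDegree_hasseDeriv_le p n
    omega
  rw [taylor_coeff, eq_C_of_natDegree_eq_zero hconst, eval_C, hasseDeriv_coeff, zero_add,
    Nat.choose_self, Nat.cast_one, one_mul]

theorem natDegree_taylor_sub_le (r : R) {p : R[X]} {e : ℕ} (h : p.natDegree ≤ e) :
    (taylor r p - p).natDegree ≤ e - 1 :=
  natDegree_le_iff_coeff_eq_zero.mpr fun n hn => by
    rw [coeff_sub, coeff_taylor_of_natDegree_le r (by omega), sub_self]

theorem coeff_taylor_sub_pred (r : R) {p : R[X]} {e : ℕ} (h : p.natDegree ≤ e) :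
    (taylor r p - p).coeff (e - 1) = e * r * p.coeff e := by
  rcases Nat.eq_zero_or_pos e with rfl | he
  · simp [coeff_taylor_of_natDegree_le r h]
  have hlin : (hasseDeriv (e - 1) p).natDegree ≤ 1 := by
    have := natDegree_hasseDeriv_le p (e - 1)
    omega
  rw [coeff_sub, taylor_coeff, eq_X_add_C_of_natDegree_le_one hlin, hasseDeriv_coeff,
    hasseDeriv_coeff, zero_add, Nat.choose_self, show 1 + (e - 1) = e by omega,
    Nat.choose_symm_of_eq_add (by omega : e = e - 1 + 1), Nat.choose_one_right]
  simp only [eval_add, eval_mul, eval_C, eval_X]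
  ring

theorem taylor_sub_one_pow_succ_apply (r : R) (k : ℕ) (p : R[X]) :
    ((taylor r - 1) ^ (k + 1)) p =
      taylor r (((taylor r - 1) ^ k) p) - ((taylor r - 1) ^ k) p := by
  rw [pow_succ', Module.End.mul_apply, LinearMap.sub_apply, Module.End.one_apply]

theorem natDegree_taylor_sub_one_pow_apply_le (r : R) {p : R[X]} {d : ℕ} (h : p.natDegree ≤ d)
    (k : ℕ) : (((taylor r - 1) ^ k) p).natDegree ≤ d - k := by
  induction k with
  | zero => simpa using h
  | succ k ih =>
    rw [taylor_sub_one_pow_succ_apply, ← Nat.sub_sub]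
    exact natDegree_taylor_sub_le r ih

theorem coeff_taylor_sub_one_pow_apply (r : R) {p : R[X]} {d k : ℕ} (h : p.natDegree ≤ d)
    (hk : k ≤ d) :
    (((taylor r - 1) ^ k) p).coeff (d - k) =
      (descPochhammer R k).eval (d : R) * r ^ k * p.coeff d := by
  induction k with
  | zero => simp
  | succ k ih =>
    rw [taylor_sub_one_pow_succ_apply, ← Nat.sub_sub,
      coeff_taylor_sub_pred r (natDegree_taylor_sub_one_pow_apply_le r h k), ih (by omega),
      descPochhammer_succ_eval, Nat.cast_sub (by omega)]
    ring

theorem fwdDiff_iter_taylor (r s : R) (p : R[X]) (k : ℕ) :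
    (fwdDiff 1)^[k] (fun j : ℕ => taylor (s + j * r) p) =
      fun j : ℕ => taylor (s + j * r) (((taylor r - 1) ^ k) p) := by
  induction k generalizing p with
  | zero => simp
  | succ k ih =>
    have hstep : fwdDiff 1 (fun j : ℕ => taylor (s + j * r) p) =
        fun j : ℕ => taylor (s + j * r) ((taylor r - 1) p) := by
      funext j
      rw [fwdDiff, LinearMap.sub_apply, Module.End.one_apply, map_sub, taylor_taylor]
      push_cast
      ring_nf
    rw [Function.iterate_succ_apply, hstep, ih, pow_succ, Module.End.mul_apply]

end Polynomial

theorem Finset.sum_perm_tsub {ι : Type*} [Fintype ι] (σ : Equiv.Perm ι) (d e : ι → ℕ)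
    (h : ∀ i j, e j ≤ d i) : ∑ i, (d (σ i) - e i) = ∑ i, d i - ∑ i, e i := by
  rw [eq_tsub_iff_add_eq_of_le (sum_le_sum fun i _ => h i i), ← sum_add_distrib,
    ← Equiv.sum_comp σ d]
  exact sum_congr rfl fun i _ => Nat.sub_add_cancel (h _ _)

namespace Matrix

variable {n R : Type*} [Fintype n] [DecidableEq n] [CommRing R] (P : Matrix n n R[X])
  {w : n → n → ℕ} {N : ℕ}

theorem det_fwdDiff_iter {m : ℕ} (f : Fin m → ℕ → R) :
    (of fun i k : Fin m => (fwdDiff 1)^[k] (f i) 0).det = (of fun i j : Fin m => f i j).det := by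
  set U : Matrix (Fin m) (Fin m) R :=
    of fun j k => (-1) ^ ((k : ℕ) - j) * ((k : ℕ).choose j : R)
  have hU : U.det = 1 := by
    rw [det_of_isUpperTriangular fun j k hkj => by
      simp [U, Nat.choose_eq_zero_of_lt (show (k : ℕ) < j from hkj)]]
    simp [U]
  suffices h :
      (of fun i k : Fin m => (fwdDiff 1)^[k] (f i) 0) = of (fun i j : Fin m => f i j) * U by
    rw [h, det_mul, hU, mul_one]
  ext i k
  simp only [of_apply, mul_apply, U, fwdDiff_iter_eq_sum_shift, zero_add, smul_eq_mul, mul_one,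
    zsmul_eq_mul, Int.cast_mul, Int.cast_pow, Int.cast_neg, Int.cast_one, Int.cast_natCast]
  rw [Fin.sum_univ_eq_sum_range
    (fun j => f i j * ((-1) ^ ((k : ℕ) - j) * ((k : ℕ).choose j : R)))]
  refine sum_subset (range_subset_range.mpr k.is_lt) (fun j _ hj => ?_) |>.trans
    (sum_congr rfl fun j _ => mul_comm _ _)
  rw [Nat.choose_eq_zero_of_lt (by simpa using hj), Nat.cast_zero, mul_zero, zero_mul]

theorem natDegree_det_le_of_natDegree_le (hw : ∀ σ : Equiv.Perm n, ∑ i, w (σ i) i = N)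
    (hP : ∀ i j, (P i j).natDegree ≤ w i j) : P.det.natDegree ≤ N := by
  rw [det_apply]
  refine natDegree_sum_le_of_forall_le _ _ fun σ _ => ?_
  rw [Units.smul_def]
  refine (natDegree_smul_le _ _).trans ((natDegree_prod_le _ _).trans ?_)
  exact hw σ ▸ sum_le_sum fun i _ => hP (σ i) i

theorem coeff_det_of_natDegree_le (hw : ∀ σ : Equiv.Perm n, ∑ i, w (σ i) i = N)
    (hP : ∀ i j, (P i j).natDegree ≤ w i j) :
    P.det.coeff N = (of fun i j => (P i j).coeff (w i j)).det := by
  rw [det_apply, finsetSum_coeff, det_apply]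
  refine sum_congr rfl fun σ _ => ?_
  rw [Units.smul_def, Units.smul_def, coeff_smul, ← hw σ,
    coeff_prod_sum_of_natDegree_le _ _ _ fun i _ => hP (σ i) i]
  rfl

theorem det_descPochhammer_eval_ne_zero [IsDomain R] [CharZero R] {m : ℕ} {v : Fin m → ℕ}
    (hv : Function.Injective v) :
    (of fun i k : Fin m => (descPochhammer R k).eval (v i : R)).det ≠ 0 := by
  rw [← det_eval_matrixOfPolynomials_eq_det_vandermonde _ _
    (fun k => descPochhammer_natDegree R k) (fun k => monic_descPochhammer R k)]
  exact det_vandermonde_ne_zero_iff.mpr fun i j hij => hv (Nat.cast_injective hij)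

end Matrix

-- `taylor (-1) - 1` is the difference operator `q ↦ q(X - 1) - q`
theorem Polynomial.det_casorati_eq_det_diff {R : Type*} [CommRing R] {m : ℕ}
    (p : Fin m → R[X]) :
    (Matrix.of fun i j : Fin m => (p i).comp (X - C ((j : R) + 1))).det =
      (Matrix.of fun i k : Fin m =>
        taylor (-1) (((taylor (-1 : R) - 1) ^ (k : ℕ)) (p i))).det := by
  have hf := Matrix.det_fwdDiff_iter fun i (j : ℕ) => taylor (-1 + j * -1 : R) (p i)
  simp only [fwdDiff_iter_taylor, Nat.cast_zero, zero_mul, add_zero] at hf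
  rw [hf]
  refine congrArg Matrix.det (Matrix.ext fun i j => ?_)
  rw [Matrix.of_apply, Matrix.of_apply, taylor_apply]
  congr 1
  simp only [map_add, map_neg, map_mul, map_one, map_natCast]
  ring

theorem Polynomial.degree_det_casorati {R : Type*} [CommRing R] [IsDomain R] [CharZero R] {m : ℕ}
    (p : Fin m → R[X]) (hp : ∀ i, p i ≠ 0)
    (hinj : Function.Injective fun i => (p i).natDegree)
    (hle : ∀ i, m - 1 ≤ (p i).natDegree) :
    (Matrix.of fun i j : Fin m => (p i).comp (X - C ((j : R) + 1))).det.degree =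
      ((∑ i, (p i).natDegree - ∑ k : Fin m, (k : ℕ) : ℕ) : WithBot ℕ) := by
  rw [det_casorati_eq_det_diff]
  set d : Fin m → ℕ := fun i => (p i).natDegree
  have hkd : ∀ i (k : Fin m), (k : ℕ) ≤ d i := fun i k => by
    have := hle i; have := k.is_lt; simp only [d]; omega
  set Q : Matrix (Fin m) (Fin m) R[X] :=
    .of fun i k => taylor (-1) (((taylor (-1 : R) - 1) ^ (k : ℕ)) (p i))
  have hQdeg : ∀ i k, (Q i k).natDegree ≤ d i - k := fun i k => by
    simpa [Q] using natDegree_taylor_sub_one_pow_apply_le (-1 : R) (le_refl (d i)) k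
  have hQcoeff : ∀ i k, (Q i k).coeff (d i - k) =
      (-1) ^ (k : ℕ) * ((p i).leadingCoeff * (descPochhammer R k).eval (d i : R)) := fun i k => by
    simp only [Q, Matrix.of_apply]
    rw [coeff_taylor_of_natDegree_le _ (natDegree_taylor_sub_one_pow_apply_le _ le_rfl k),
      coeff_taylor_sub_one_pow_apply _ le_rfl (hkd i k), leadingCoeff]
    ring
  have hw := fun σ => Finset.sum_perm_tsub σ d (fun k : Fin m => (k : ℕ)) fun i k => hkd i k
  have hlead : Q.det.coeff (∑ i, d i - ∑ k : Fin m, (k : ℕ)) ≠ 0 := by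
    have hrow := Matrix.det_mul_row (fun k : Fin m => (-1 : R) ^ (k : ℕ))
      (.of fun i k => (p i).leadingCoeff * (descPochhammer R k).eval (d i : R))
    have hcol := Matrix.det_mul_column (fun i => (p i).leadingCoeff)
      (.of fun i k : Fin m => (descPochhammer R k).eval (d i : R))
    simp only [Matrix.of_apply] at hrow hcol
    rw [Q.coeff_det_of_natDegree_le hw hQdeg]
    simp only [hQcoeff]
    rw [hrow, hcol]
    exact mul_ne_zero (prod_ne_zero_iff.mpr fun k _ => pow_ne_zero _ (neg_ne_zero.mpr one_ne_zero))
      (mul_ne_zero (prod_ne_zero_iff.mpr fun i _ => leadingCoeff_ne_zero.mpr (hp i))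
        (Matrix.det_descPochhammer_eval_ne_zero hinj))
  have hQ : Q.det ≠ 0 := fun h => hlead (by rw [h, coeff_zero])
  rw [degree_eq_natDegree hQ,
    le_antisymm (Q.natDegree_det_le_of_natDegree_le hw hQdeg) (le_natDegree_of_ne_zero hlead)]

namespace Polynomial

theorem degree_sum_fin_C_mul_monic {R : Type*} [Semiring R] {m b : ℕ} (hb : b < m)
    (c : Fin m → R) (q : Fin m → R[X]) (hq : ∀ i, (q i).Monic)
    (hdeg : ∀ i, (q i).natDegree = i)
    (hc : ∀ i : Fin m, b < i → c i = 0) (hcb : c ⟨b, hb⟩ ≠ 0) :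
    (∑ i, C (c i) * q i).degree = b := by
  have hterm : ∀ i : Fin m, (C (c i) * q i).natDegree ≤ b := fun i => by
    rcases le_or_gt (i : ℕ) b with hib | hib
    · exact (natDegree_C_mul_le _ _).trans (hdeg i ▸ hib)
    · simp [hc i hib]
  refine degree_eq_of_le_of_coeff_ne_zero
    (degree_le_of_natDegree_le (natDegree_sum_le_of_forall_le _ _ fun i _ => hterm i)) ?_
  have hqb : (q ⟨b, hb⟩).coeff b = 1 := by simpa [hdeg] using (hq ⟨b, hb⟩).coeff_natDegree
  rw [finsetSum_coeff, sum_eq_single ⟨b, hb⟩ (fun i _ hib => ?_) (by simp), coeff_C_mul, hqb,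
    mul_one]
  · exact hcb
  rcases lt_or_gt_of_ne (Fin.val_ne_of_ne hib) with hlt | hgt
  · rw [coeff_C_mul, coeff_eq_zero_of_natDegree_lt (hdeg i ▸ hlt), mul_zero]
  · rw [hc i hgt, C_0, zero_mul, coeff_zero]

theorem natDegree_ascPochhammer_comp_X_add_C {R : Type*} [CommSemiring R] [Nontrivial R]
    [NoZeroDivisors R] (n : ℕ) (r : R) : ((ascPochhammer R n).comp (X + C r)).natDegree = n := by
  rw [← taylor_apply, natDegree_taylor, ascPochhammer_natDegree]

end Polynomial

theorem degree_calR {α m : ℕ} (hα : 0 < α) {a : ℕ → ℝ} (ha : a (m - 1) ≠ 0)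
    {M : Matrix (Fin m) (Fin m) ℝ}
    (hM : ∀ i j : Fin m,
      M i j = if (i : ℕ) + (j : ℕ) ≤ m - 1 then a ((i : ℕ) + (j : ℕ)) else 0)
    (j0 : Fin m) : (calR α m M j0).degree = ((α + m - 1 - (j0 : ℕ) : ℕ) : WithBot ℕ) := by
  have hb : m - 1 - (j0 : ℕ) < m := by omega
  have hshift : ∀ r : ℝ, (X - C r + 1 : ℝ[X]) = X + C (1 - r) := fun r => by
    rw [map_sub, map_one]; ring
  -- only the entries `M j0 i` with `i ≤ m - 1 - j0` survive, the last one being `a (m - 1)`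
  set S : ℝ[X] := ∑ i : Fin m, C ((-1) ^ (i : ℕ) * M j0 i / (α + i).factorial) *
    (ascPochhammer ℝ i).comp (X - C (i : ℝ) + 1)
  have hS : S.degree = (m - 1 - (j0 : ℕ) : ℕ) := degree_sum_fin_C_mul_monic hb
    (fun i => (-1) ^ (i : ℕ) * M j0 i / (α + i).factorial)
    (fun i => (ascPochhammer ℝ i).comp (X - C (i : ℝ) + 1))
    (fun i => hshift (i : ℝ) ▸ (monic_ascPochhammer ℝ i).comp_X_add_C _)
    (fun i => hshift (i : ℝ) ▸ natDegree_ascPochhammer_comp_X_add_C _ _)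
    (fun i hi => by simp [hM, show ¬ (j0 : ℕ) + i ≤ m - 1 by omega])
    (by simp [hM, show (j0 : ℕ) + (m - 1 - j0) = m - 1 by omega, ha, Nat.factorial_ne_zero])
  have hB : ((ascPochhammer ℝ α).comp (X + 1)).degree = α := by
    rw [← C_1, degree_eq_natDegree ((monic_ascPochhammer ℝ α).comp_X_add_C 1).ne_zero,
      natDegree_ascPochhammer_comp_X_add_C]
  have hlow : (C ((α - 1).factorial / (m - 1 - j0).factorial : ℝ) *
      (ascPochhammer ℝ (m - 1 - (j0 : ℕ))).comp (X + 1)).degree ≤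
        (m - 1 - (j0 : ℕ) : ℕ) := by
    refine degree_le_of_natDegree_le ((natDegree_C_mul_le _ _).trans ?_)
    rw [← C_1, natDegree_ascPochhammer_comp_X_add_C]
  have htop : (C ((j0 : ℕ).factorial : ℝ) * (ascPochhammer ℝ α).comp (X + 1) * S).degree =
      α + (m - 1 - (j0 : ℕ) : ℕ) := by
    rw [degree_mul, degree_mul, degree_C (by positivity), hB, hS, zero_add]
  unfold calR
  rw [degree_add_eq_right_of_degree_lt (hlow.trans_lt ?_), htop]
  · norm_cast; omega
  · rw [htop]; norm_cast; omega

theorem hankel_casorati_degree_general (α m : ℕ) (hα : m ≤ α)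
    (a : ℕ → ℝ) (ha : a (m - 1) ≠ 0)
    (M : Matrix (Fin m) (Fin m) ℝ)
    (hM : ∀ i j : Fin m, M i j = if (i : ℕ) + (j : ℕ) ≤ m - 1 then a ((i : ℕ) + (j : ℕ)) else 0) :
    (∀ j0 : Fin m, (calR α m M j0).degree = ((α + m - 1 - (j0 : ℕ) : ℕ) : WithBot ℕ)) ∧
    (Matrix.det (Matrix.of fun i j : Fin m =>
        (calR α m M i).comp (Polynomial.X - Polynomial.C ((j : ℝ) + 1)))).degree
      = ((m * α : ℕ) : WithBot ℕ) := by
  have hdeg : ∀ j0 : Fin m, (calR α m M j0).degree = (α + m - 1 - (j0 : ℕ) : ℕ) :=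
    fun j0 => degree_calR (by have := j0.is_lt; omega) ha hM j0
  refine ⟨hdeg, ?_⟩
  have hnat : ∀ i, (calR α m M i).natDegree = α + m - 1 - i :=
    fun i => natDegree_eq_of_degree_eq_some (hdeg i)
  rw [degree_det_casorati (calR α m M)
    (fun i => ne_zero_of_natDegree_gt (n := 0) (by rw [hnat]; omega))
    (fun i j h => Fin.ext (by simp only [hnat] at h; omega)) (fun i => by rw [hnat]; omega)]
  have hrev : ∑ i : Fin m, (α + m - 1 - i) = m * α + ∑ k : Fin m, (k : ℕ) := calc
    _ = ∑ i : Fin m, (α + (Fin.revPerm i : ℕ)) := sum_congr rfl fun i _ => by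
      simp only [Fin.revPerm_apply, Fin.val_rev]; omega
    _ = m * α + ∑ k : Fin m, (k : ℕ) := by
      rw [sum_add_distrib, Equiv.sum_comp Fin.revPerm (fun k : Fin m => (k : ℕ))]; simp
  simp only [hnat, hrev, Nat.add_sub_cancel]

/-- For the Hankel-type matrix M_{i,j} = a_{i+j} (i+j ≤ m-1), 0 otherwise, with
a_{m-1} ≠ 0: deg ℛ_j = α + m - j for all j, and the Casorati determinant
Ω(x) = det(ℛ_i(x-j)) has degree mα. -/
theorem hankel_casorati_degree (α m : ℕ) (hm : 1 ≤ m) (hα : m ≤ α)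
    (a : ℕ → ℝ) (ha : a (m - 1) ≠ 0)
    (M : Matrix (Fin m) (Fin m) ℝ)
    (hM : ∀ i j : Fin m, M i j = if (i : ℕ) + (j : ℕ) ≤ m - 1 then a ((i : ℕ) + (j : ℕ)) else 0) :
    (∀ j0 : Fin m, (calR α m M j0).degree = ((α + m - 1 - (j0 : ℕ) : ℕ) : WithBot ℕ)) ∧
    (Matrix.det (Matrix.of fun i j : Fin m =>
        (calR α m M i).comp (Polynomial.X - Polynomial.C ((j : ℝ) + 1)))).degree
      = ((m * α : ℕ) : WithBot ℕ) :=
  hankel_casorati_degree_general α m hα a ha M hM
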